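/- Let n ≥ 1 and B ≥ 2 be integers. Suppose (m_0,…,m_n) is a feasible tuple (nonnegative integers with Σ_{k=0}^n B^{-m_k} ≤ 1) such that Σ_{k=0}^n m_k x_k = E(x) for some x in the interior of Δ_n (all coordinates strictly positive). If (m_0',…,m_n') is any feasible tuple with m_k' ≤ m_k for all 0 ≤ k ≤ n, then (m_0',…,m_n') = (m_0,…,m_n). -/

import Mathlib

open Finset

/-- The extremal function
`E(x) = min{ Σ m(j) x(j) : m(j) ∈ ℕ, Σ sgn(x(j)) B^{-m(j)} ≤ 1 }`. -/
noncomputable def Efun (n B : ℕ) (x : Fin (n + 1) → ℝ) : ℝ :=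
  sInf { s : ℝ | ∃ m : Fin (n + 1) → ℕ,
    (∑ j, Real.sign (x j) * ((B : ℝ) ^ (m j))⁻¹) ≤ 1 ∧
    s = ∑ j, (m j : ℝ) * x j }

theorem Real.sign_le_one (r : ℝ) : Real.sign r ≤ 1 := by
  rcases Real.sign_apply_eq r with h | h | h <;> rw [h] <;> norm_num

theorem Efun_le_of_feasible {n B : ℕ} {x : Fin (n + 1) → ℝ} (hx : ∀ k, 0 ≤ x k)
    {m : Fin (n + 1) → ℕ} (hfeas : (∑ k, ((B : ℝ) ^ (m k))⁻¹) ≤ 1) :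
    Efun n B x ≤ ∑ k, (m k : ℝ) * x k := by
  have hbdd : BddBelow { s : ℝ | ∃ m : Fin (n + 1) → ℕ,
      (∑ j, Real.sign (x j) * ((B : ℝ) ^ (m j))⁻¹) ≤ 1 ∧ s = ∑ j, (m j : ℝ) * x j } := by
    refine ⟨0, fun s ⟨μ, _, hs⟩ => hs ▸ ?_⟩
    exact sum_nonneg fun j _ => mul_nonneg (Nat.cast_nonneg _) (hx j)
  refine csInf_le hbdd ⟨m, ?_, rfl⟩
  calc (∑ j, Real.sign (x j) * ((B : ℝ) ^ (m j))⁻¹)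
      ≤ ∑ j, ((B : ℝ) ^ (m j))⁻¹ :=
        sum_le_sum fun j _ => mul_le_of_le_one_left (by positivity) (Real.sign_le_one _)
    _ ≤ 1 := hfeas

theorem eq_of_le_of_sum_mul_le_sum_mul {ι : Type*} [Fintype ι] {a b w : ι → ℝ}
    (hw : ∀ k, 0 < w k) (hle : ∀ k, a k ≤ b k)
    (hsum : ∑ k, b k * w k ≤ ∑ k, a k * w k) : a = b := by
  have hle' : ∀ k ∈ univ, a k * w k ≤ b k * w k := fun k _ =>
    mul_le_mul_of_nonneg_right (hle k) (hw k).le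
  have heq := (sum_eq_sum_iff_of_le hle').mp (le_antisymm (sum_le_sum hle') hsum)
  exact funext fun k => mul_right_cancel₀ (hw k).ne' (heq k (mem_univ k))

theorem stmt9_general (n B : ℕ)
    (m : Fin (n + 1) → ℕ)
    (x : Fin (n + 1) → ℝ) (hxpos : ∀ k, 0 < x k)
    (hmin : (∑ k, (m k : ℝ) * x k) = Efun n B x)
    (m' : Fin (n + 1) → ℕ) (hfeas' : (∑ k, ((B : ℝ) ^ (m' k))⁻¹) ≤ 1)
    (hle : ∀ k, m' k ≤ m k) :
    m' = m := by
  have hcast : (fun k => (m' k : ℝ)) = fun k => (m k : ℝ) :=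
    eq_of_le_of_sum_mul_le_sum_mul hxpos (fun k => by exact_mod_cast hle k)
      (hmin ▸ Efun_le_of_feasible (fun k => (hxpos k).le) hfeas')
  exact funext fun k => by exact_mod_cast congrFun hcast k

theorem stmt9 (n B : ℕ) (hn : 1 ≤ n) (hB : 2 ≤ B)
    (m : Fin (n + 1) → ℕ) (hfeas : (∑ k, ((B : ℝ) ^ (m k))⁻¹) ≤ 1)
    (x : Fin (n + 1) → ℝ) (hxpos : ∀ k, 0 < x k) (hxsum : (∑ k, x k) = 1)
    (hmin : (∑ k, (m k : ℝ) * x k) = Efun n B x)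
    (m' : Fin (n + 1) → ℕ) (hfeas' : (∑ k, ((B : ℝ) ^ (m' k))⁻¹) ≤ 1)
    (hle : ∀ k, m' k ≤ m k) :
    m' = m :=
  stmt9_general n B m x hxpos hmin m' hfeas' hle
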